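/- arXiv:1708.02168 — 6 statements merged into one kernel-verified Lean document; each statement's English description precedes it below -/
import Mathlib

section
/- Let N ≥ 1 be an integer and let P, Q : ℝ → ℝ be continuous functions such that for every ε > 0 there exists T > 0 with |P(t)| ≤ ε·|Q(t)| whenever |t| ≥ T. Let (v_n)_{n≥1}, v and z be Lebesgue measurable functions from ℝ^N to ℝ such that z is integrable on every bounded Borel set, sup_{n≥1} ∫_{ℝ^N} |Q(v_n(x))·z(x)| dx < +∞, and P(v_n(x)) → v(x) for almost every x ∈ ℝ^N as n → +∞. Then for every bounded Borel set Ω ⊆ ℝ^N one has ∫_Ω |P(v_n(x)) − v(x)|·|z(x)| dx → 0 as n → +∞. -/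
/-!
Since `P = o(Q)` at infinity and `P` is bounded on compact sets, for every `δ > 0` there is `M`
with `|P t| ≤ M + δ |Q t|` for all `t`. Hence `|P (v n) z| ≤ M |z| + δ |Q (v n) z|`, where `M |z|`
is integrable on the bounded set `Ω` and `∫ |Q (v n) z|` is bounded in `n`: the family
`P (v n) z` is uniformly integrable on the finite measure space `Ω`, and Vitali's convergence
theorem upgrades the a.e. convergence `P (v n) z → vlim z` to convergence in `L¹(Ω)`.
-/

open MeasureTheory Filter Topology ENNReal Asymptotics
open scoped NNReal

theorem Asymptotics.IsLittleO.exists_norm_le_add_mul {X E F : Type*} [TopologicalSpace X]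
    [SeminormedAddGroup E] [SeminormedAddGroup F] {P : X → E} {Q : X → F} (hP : Continuous P)
    (h : P =o[cocompact X] Q) {δ : ℝ} (hδ : 0 < δ) : ∃ M, ∀ x, ‖P x‖ ≤ M + δ * ‖Q x‖ := by
  obtain ⟨K, hK, hKc⟩ := mem_cocompact.1 (h.def hδ)
  obtain ⟨M, hM⟩ := hK.exists_bound_of_continuousOn hP.continuousOn
  refine ⟨max M 0, fun x => ?_⟩
  have hQ : 0 ≤ δ * ‖Q x‖ := by positivity
  by_cases hx : x ∈ K
  · linarith [hM x hx, le_max_left M 0]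
  · have hPx : ‖P x‖ ≤ δ * ‖Q x‖ := hKc hx
    linarith [le_max_right M 0]

namespace MeasureTheory

variable {α β γ ι : Type*} [MeasurableSpace α] {μ : Measure α}
  [NormedAddCommGroup β] [NormedAddCommGroup γ]

theorem eLpNorm_one_le_add_mul_of_norm_le {F : α → β} {g : α → ℝ} {H : α → γ} {δ : ℝ≥0}
    (hg : AEStronglyMeasurable g μ) (hF : ∀ x, ‖F x‖ ≤ ‖g x‖ + δ * ‖H x‖) :
    eLpNorm F 1 μ ≤ eLpNorm g 1 μ + δ * eLpNorm H 1 μ := by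
  simp only [eLpNorm_one_eq_lintegral_enorm]
  calc ∫⁻ x, ‖F x‖ₑ ∂μ ≤ ∫⁻ x, ‖g x‖ₑ + δ * ‖H x‖ₑ ∂μ := by
        refine lintegral_mono fun x => ?_
        simp only [enorm_eq_nnnorm, ← ENNReal.coe_mul, ← ENNReal.coe_add, ENNReal.coe_le_coe]
        exact_mod_cast hF x
    _ = ∫⁻ x, ‖g x‖ₑ ∂μ + δ * ∫⁻ x, ‖H x‖ₑ ∂μ := by
        rw [lintegral_add_left' hg.enorm, lintegral_const_mul' _ _ ENNReal.coe_ne_top]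

theorem uniformIntegrable_one_of_norm_le_add_mul {f : ι → α → β} {h : ι → α → γ} {C : ℝ≥0∞}
    (hC : C ≠ ∞) (hf : ∀ i, AEStronglyMeasurable (f i) μ) (hh : ∀ i, eLpNorm (h i) 1 μ ≤ C)
    (hdom : ∀ δ : ℝ≥0, 0 < δ →
      ∃ g : α → ℝ, Integrable g μ ∧ ∀ i x, ‖f i x‖ ≤ ‖g x‖ + δ * ‖h i x‖) :
    UniformIntegrable f 1 μ := by
  refine ⟨hf, fun ε hε => ?_, ?_⟩
  · obtain ⟨δ, hδ, hδC⟩ := ENNReal.exists_nnreal_pos_mul_lt hC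
      (ENNReal.ofReal_pos.2 (half_pos hε)).ne'
    obtain ⟨g, hg, hfg⟩ := hdom δ hδ
    obtain ⟨η, hη, hgη⟩ :=
      (memLp_one_iff_integrable.2 hg).eLpNorm_indicator_le le_rfl one_ne_top (half_pos hε)
    refine ⟨η, hη, fun i s hs hμs => ?_⟩
    calc eLpNorm (s.indicator (f i)) 1 μ
        ≤ eLpNorm (s.indicator g) 1 μ + δ * eLpNorm (h i) 1 (μ.restrict s) := by
          rw [eLpNorm_indicator_eq_eLpNorm_restrict hs, eLpNorm_indicator_eq_eLpNorm_restrict hs]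
          exact eLpNorm_one_le_add_mul_of_norm_le hg.1.restrict (hfg i)
      _ ≤ ENNReal.ofReal (ε / 2) + ENNReal.ofReal (ε / 2) := by
          gcongr
          · exact hgη s hs hμs
          · refine le_trans ?_ hδC.le
            gcongr
            exact (eLpNorm_mono_measure _ Measure.restrict_le_self).trans (hh i)
      _ = ENNReal.ofReal ε := by
          rw [← ENNReal.ofReal_add (half_pos hε).le (half_pos hε).le, add_halves]
  · obtain ⟨g, hg, hfg⟩ := hdom 1 one_pos
    have hbound : ∀ i, eLpNorm (f i) 1 μ ≤ eLpNorm g 1 μ + C := fun i => by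
      have := eLpNorm_one_le_add_mul_of_norm_le hg.1 (hfg i)
      rw [ENNReal.coe_one, one_mul] at this
      exact this.trans (by gcongr; exact hh i)
    refine ⟨(eLpNorm g 1 μ + C).toNNReal, fun i => ?_⟩
    rw [ENNReal.coe_toNNReal
      (ENNReal.add_ne_top.2 ⟨(memLp_one_iff_integrable.2 hg).eLpNorm_ne_top, hC⟩)]
    exact hbound i

theorem uniformIntegrable_comp_mul_of_isLittleO {P Q : ℝ → ℝ} (hP : Continuous P)
    (hPQ : P =o[cocompact ℝ] Q) {v : ι → α → ℝ} (hv : ∀ i, AEStronglyMeasurable (v i) μ)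
    {z : α → ℝ} (hz : Integrable z μ) {C : ℝ≥0∞} (hC : C ≠ ∞)
    (hQ : ∀ i, eLpNorm (fun x => Q (v i x) * z x) 1 μ ≤ C) :
    UniformIntegrable (fun i x => P (v i x) * z x) 1 μ := by
  refine uniformIntegrable_one_of_norm_le_add_mul hC
    (fun i => (hP.comp_aestronglyMeasurable (hv i)).mul hz.1) hQ fun δ hδ => ?_
  obtain ⟨M, hM⟩ := hPQ.exists_norm_le_add_mul hP (NNReal.coe_pos.2 hδ)
  refine ⟨fun x => M * z x, hz.const_mul M, fun i x => ?_⟩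
  simp only [norm_mul]
  have := mul_le_mul_of_nonneg_right (hM (v i x)) (norm_nonneg (z x))
  nlinarith [Real.le_norm_self M, norm_nonneg (z x)]

end MeasureTheory

theorem stmt_0_general (N : ℕ) (P Q : ℝ → ℝ)
    (hP : Continuous P)
    (hPQ : ∀ ε > (0:ℝ), ∃ T > (0:ℝ), ∀ t : ℝ, T ≤ |t| → |P t| ≤ ε * |Q t|)
    (v : ℕ → EuclideanSpace ℝ (Fin N) → ℝ) (vlim z : EuclideanSpace ℝ (Fin N) → ℝ)
    (hv : ∀ n, Measurable (v n))
    (hzloc : ∀ Ω : Set (EuclideanSpace ℝ (Fin N)), MeasurableSet Ω → Bornology.IsBounded Ω →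
      IntegrableOn z Ω volume)
    (hsup : ∃ C : ℝ≥0∞, C < ⊤ ∧ ∀ n, ∫⁻ x, ‖Q (v n x) * z x‖₊ ∂volume ≤ C)
    (hae : ∀ᵐ x ∂volume, Tendsto (fun n => P (v n x)) atTop (𝓝 (vlim x))) :
    ∀ Ω : Set (EuclideanSpace ℝ (Fin N)), MeasurableSet Ω → Bornology.IsBounded Ω →
      Tendsto (fun n => ∫ x in Ω, |P (v n x) - vlim x| * |z x| ∂volume) atTop (𝓝 0) := by
  intro Ω hΩ hbd
  obtain ⟨C, hC, hCv⟩ := hsup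
  have : IsFiniteMeasure (volume.restrict Ω) := isFiniteMeasure_restrict.2 hbd.measure_lt_top.ne
  have hPQ' : P =o[cocompact ℝ] Q := IsLittleO.of_bound fun ε hε => by
    obtain ⟨T, -, hT⟩ := hPQ ε hε
    exact (tendsto_norm_cocompact_atTop.eventually_ge_atTop T).mono hT
  have hUI := uniformIntegrable_comp_mul_of_isLittleO hP hPQ' (fun n => (hv n).aestronglyMeasurable)
    (hzloc Ω hΩ hbd) hC.ne fun n => by
      rw [eLpNorm_one_eq_lintegral_enorm]
      exact (setLIntegral_le_lintegral _ _).trans (hCv n)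
  have hlim : ∀ᵐ x ∂volume.restrict Ω,
      Tendsto (fun n => P (v n x) * z x) atTop (𝓝 (vlim x * z x)) :=
    (ae_restrict_of_ae hae).mono fun x hx => hx.mul_const _
  have hvz := hUI.memLp_of_ae_tendsto hlim
  have hL1 := tendsto_Lp_finite_of_tendsto_ae le_rfl one_ne_top hUI.1 hvz hUI.2.1 hlim
  have heq : ∀ n, ∫ x in Ω, |P (v n x) - vlim x| * |z x| =
      (eLpNorm ((fun x => P (v n x) * z x) - fun x => vlim x * z x) 1
        (volume.restrict Ω)).toReal := by
    intro n
    rw [eLpNorm_one_eq_lintegral_enorm,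
      ← integral_norm_eq_lintegral_enorm ((hUI.1 n).sub hvz.1)]
    simp [← sub_mul]
  simpa only [heq, Function.comp_def, ENNReal.toReal_zero] using
    (ENNReal.tendsto_toReal ENNReal.zero_ne_top).comp hL1

theorem stmt_0 (N : ℕ) (hN : 1 ≤ N) (P Q : ℝ → ℝ)
    (hP : Continuous P) (hQ : Continuous Q)
    (hPQ : ∀ ε > (0:ℝ), ∃ T > (0:ℝ), ∀ t : ℝ, T ≤ |t| → |P t| ≤ ε * |Q t|)
    (v : ℕ → EuclideanSpace ℝ (Fin N) → ℝ) (vlim z : EuclideanSpace ℝ (Fin N) → ℝ)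
    (hv : ∀ n, Measurable (v n)) (hvlim : Measurable vlim) (hz : Measurable z)
    (hzloc : ∀ Ω : Set (EuclideanSpace ℝ (Fin N)), MeasurableSet Ω → Bornology.IsBounded Ω →
      IntegrableOn z Ω volume)
    (hsup : ∃ C : ℝ≥0∞, C < ⊤ ∧ ∀ n, ∫⁻ x, ‖Q (v n x) * z x‖₊ ∂volume ≤ C)
    (hae : ∀ᵐ x ∂volume, Tendsto (fun n => P (v n x)) atTop (𝓝 (vlim x))) :
    ∀ Ω : Set (EuclideanSpace ℝ (Fin N)), MeasurableSet Ω → Bornology.IsBounded Ω →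
      Tendsto (fun n => ∫ x in Ω, |P (v n x) - vlim x| * |z x| ∂volume) atTop (𝓝 0) :=
  stmt_0_general N P Q hP hPQ v vlim z hv hzloc hsup hae
end

section
/- Let N ≥ 1 be an integer and let P, Q : ℝ → ℝ be continuous functions such that: for every ε > 0 there exists T > 0 with |P(t)| ≤ ε·|Q(t)| whenever |t| ≥ T, and for every ε > 0 there exists t₀ > 0 with |P(t)| ≤ ε·|Q(t)| whenever 0 < |t| ≤ t₀. Let (v_n)_{n≥1}, v and z be Lebesgue measurable functions from ℝ^N to ℝ such that z is integrable on every bounded Borel set, sup_{n≥1} ∫_{ℝ^N} |Q(v_n(x))·z(x)| dx < +∞, P(v_n(x)) → v(x) for almost every x ∈ ℝ^N as n → +∞, and moreover for every ε > 0 there exists ρ > 0 such that |v_n(x)| ≤ ε for every n ≥ 1 and every x with |x| ≥ ρ. Then ∫_{ℝ^N} |P(v_n(x)) − v(x)|·|z(x)| dx → 0 as n → +∞. -/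
/-!
Multiply through by `z`, so that `F n = P ∘ v n * z` must converge in `L¹` to `vlim * z`.
For `δ > 0`, `P` is bounded on compacts and `|P| ≤ δ |Q|` near `±∞`, so `|P| ≤ M + δ |Q|`;
as `|P| ≤ δ |Q|` near `0` and `v n` is uniformly small outside a ball `B`, this gives
`|F n| ≤ M |z| 𝟙_B + δ |Q ∘ v n * z|` with an integrable first term, so the parts of `F n`
above `m := M |z| 𝟙_B` have uniformly small `L¹` norm. Clipping at level `m` then splits
`F n - vlim * z` into such an excess, its analogue for the limit (small by Fatou), and a
difference of clipped functions, which tends to `0` by dominated convergence.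
-/

open MeasureTheory Filter Topology ENNReal

def clip (m a : ℝ) : ℝ := max (-m) (min m a)

theorem continuous_clip : Continuous fun p : ℝ × ℝ => clip p.1 p.2 := by
  unfold clip; fun_prop

theorem abs_clip_le {m : ℝ} (hm : 0 ≤ m) (a : ℝ) : |clip m a| ≤ m :=
  abs_le.2 ⟨le_max_left _ _, max_le (by linarith) (min_le_left _ _)⟩

theorem abs_sub_clip {m : ℝ} (hm : 0 ≤ m) (a : ℝ) : |a - clip m a| = max (|a| - m) 0 := by
  simp only [clip, abs_eq_max_neg, max_def, min_def]
  split_ifs <;> linarith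

theorem enorm_sub_clip {m : ℝ} (hm : 0 ≤ m) (a : ℝ) :
    ‖a - clip m a‖ₑ = ENNReal.ofReal (|a| - m) := by
  rw [Real.enorm_eq_ofReal_abs, abs_sub_clip hm, ENNReal.ofReal_max, ENNReal.ofReal_zero, max_zero]

section
variable {α : Type*} [MeasurableSpace α] {μ : Measure α}

theorem lintegral_enorm_le_of_tendsto_ae {f : ℕ → α → ℝ} {g : α → ℝ} {C : ℝ≥0∞}
    (hf : ∀ n, AEStronglyMeasurable (f n) μ)
    (hlim : ∀ᵐ x ∂μ, Tendsto (fun n => f n x) atTop (𝓝 (g x)))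
    (hC : ∀ n, ∫⁻ x, ‖f n x‖ₑ ∂μ ≤ C) : ∫⁻ x, ‖g x‖ₑ ∂μ ≤ C := by
  have := Lp.eLpNorm_lim_le_liminf_eLpNorm (p := 1) hf g hlim
  simp only [eLpNorm_one_eq_lintegral_enorm] at this
  exact this.trans (liminf_le_of_frequently_le' (.of_forall hC))

theorem tendsto_lintegral_enorm_sub_of_uniform_tail {F : ℕ → α → ℝ} {G : α → ℝ}
    (hF : ∀ n, AEStronglyMeasurable (F n) μ)
    (hlim : ∀ᵐ x ∂μ, Tendsto (fun n => F n x) atTop (𝓝 (G x)))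
    (htail : ∀ ε > 0, ∃ m : α → ℝ, 0 ≤ m ∧ Integrable m μ ∧
      ∀ n, ∫⁻ x, ENNReal.ofReal (|F n x| - m x) ∂μ ≤ ε) :
    Tendsto (fun n => ∫⁻ x, ‖F n x - G x‖ₑ ∂μ) atTop (𝓝 0) := by
  rw [ENNReal.tendsto_atTop_zero]
  intro η hη
  obtain ⟨m, hm0, hm, hFm⟩ := htail (η / 3) (by simp [hη.ne'])
  have hG : AEStronglyMeasurable G μ := aestronglyMeasurable_of_tendsto_ae _ hF hlim
  set T : ℕ → α → ℝ := fun n x => clip (m x) (F n x)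
  set TG : α → ℝ := fun x => clip (m x) (G x)
  have hT n : AEStronglyMeasurable (T n) μ :=
    continuous_clip.comp_aestronglyMeasurable₂ hm.1 (hF n)
  have hTG : AEStronglyMeasurable TG μ := continuous_clip.comp_aestronglyMeasurable₂ hm.1 hG
  have hTlim : ∀ᵐ x ∂μ, Tendsto (fun n => T n x) atTop (𝓝 (TG x)) := by
    filter_upwards [hlim] with x hx
    exact (continuous_clip.comp (Continuous.prodMk_right (m x))).continuousAt.tendsto.comp hx
  have hnear n : ∫⁻ x, ‖F n x - T n x‖ₑ ∂μ ≤ η / 3 := by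
    simpa only [T, enorm_sub_clip (hm0 _)] using hFm n
  have hlimit : ∫⁻ x, ‖G x - TG x‖ₑ ∂μ ≤ η / 3 := by
    refine lintegral_enorm_le_of_tendsto_ae (fun n => (hF n).sub (hT n)) ?_ hnear
    filter_upwards [hlim, hTlim] with x hx hTx
    exact hx.sub hTx
  have hmiddle : Tendsto (fun n => ∫⁻ x, ‖T n x - TG x‖ₑ ∂μ) atTop (𝓝 0) := by
    simpa only [ofReal_norm] using tendsto_lintegral_norm_of_dominated_convergence hT hm.2
      (fun n => .of_forall fun x => by simpa [T] using abs_clip_le (hm0 x) (F n x)) hTlim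
  obtain ⟨N, hN⟩ := ENNReal.tendsto_atTop_zero.1 hmiddle (η / 3) (by simp [hη.ne'])
  refine ⟨N, fun n hn => ?_⟩
  calc ∫⁻ x, ‖F n x - G x‖ₑ ∂μ
      ≤ ∫⁻ x, ‖F n x - T n x‖ₑ + ‖T n x - TG x‖ₑ + ‖G x - TG x‖ₑ ∂μ := by
        refine lintegral_mono fun x => ?_
        simpa only [edist_eq_enorm_sub, enorm_sub_rev (TG x)] using
          edist_triangle4 (F n x) (T n x) (TG x) (G x)
    _ = ∫⁻ x, ‖F n x - T n x‖ₑ ∂μ + ∫⁻ x, ‖T n x - TG x‖ₑ ∂μ + ∫⁻ x, ‖G x - TG x‖ₑ ∂μ := by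
        have h₁ : AEMeasurable (fun x => ‖F n x - T n x‖ₑ) μ := ((hF n).sub (hT n)).enorm
        have h₂ : AEMeasurable (fun x => ‖T n x - TG x‖ₑ) μ := ((hT n).sub hTG).enorm
        have h₁₂ : AEMeasurable (fun x => ‖F n x - T n x‖ₑ + ‖T n x - TG x‖ₑ) μ := h₁.add h₂
        rw [lintegral_add_left' h₁₂, lintegral_add_left' h₁]
    _ ≤ η / 3 + η / 3 + η / 3 := add_le_add (add_le_add (hnear n) (hN n hn)) hlimit
    _ = η := ENNReal.add_thirds η

theorem tendsto_lintegral_enorm_sub_of_abs_le_add_mul {F : ℕ → α → ℝ} {G : α → ℝ}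
    {q : ℕ → α → ℝ} {C : ℝ≥0∞} (hF : ∀ n, AEStronglyMeasurable (F n) μ)
    (hlim : ∀ᵐ x ∂μ, Tendsto (fun n => F n x) atTop (𝓝 (G x)))
    (hC : C ≠ ∞) (hq : ∀ n, ∫⁻ x, ‖q n x‖ₑ ∂μ ≤ C)
    (hdom : ∀ δ > 0, ∃ m : α → ℝ, 0 ≤ m ∧ Integrable m μ ∧
      ∀ n x, |F n x| ≤ m x + δ * |q n x|) :
    Tendsto (fun n => ∫⁻ x, ‖F n x - G x‖ₑ ∂μ) atTop (𝓝 0) := by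
  refine tendsto_lintegral_enorm_sub_of_uniform_tail hF hlim fun ε hε => ?_
  obtain ⟨δ, hδ, hδC⟩ := ENNReal.exists_nnreal_pos_mul_lt hC hε.ne'
  obtain ⟨m, hm0, hm, hFm⟩ := hdom δ (NNReal.coe_pos.2 hδ)
  refine ⟨m, hm0, hm, fun n => ?_⟩
  calc ∫⁻ x, ENNReal.ofReal (|F n x| - m x) ∂μ ≤ ∫⁻ x, δ * ‖q n x‖ₑ ∂μ := by
        refine lintegral_mono fun x => ?_
        rw [Real.enorm_eq_ofReal_abs, ← ENNReal.ofReal_coe_nnreal,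
          ← ENNReal.ofReal_mul δ.coe_nonneg]
        exact ENNReal.ofReal_le_ofReal (by linarith [hFm n x])
    _ = δ * ∫⁻ x, ‖q n x‖ₑ ∂μ := lintegral_const_mul' _ _ coe_ne_top
    _ ≤ δ * C := by gcongr; exact hq n
    _ ≤ ε := hδC.le

end

section
variable {P Q : ℝ → ℝ}

theorem abs_le_mul_abs_of_abs_le (hP : Continuous P) (hQ : Continuous Q) {δ t₀ : ℝ} (ht₀ : 0 < t₀)
    (h : ∀ t, 0 < |t| → |t| ≤ t₀ → |P t| ≤ δ * |Q t|) {t : ℝ} (ht : |t| ≤ t₀) :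
    |P t| ≤ δ * |Q t| := by
  rcases eq_or_ne t 0 with rfl | ht0
  · have hclosed : IsClosed {s | |P s| ≤ δ * |Q s|} := isClosed_le (by fun_prop) (by fun_prop)
    have hsub : Set.Ioc 0 t₀ ⊆ {s | |P s| ≤ δ * |Q s|} := fun s hs =>
      h s (by simp [hs.1.ne']) (by rw [abs_of_pos hs.1]; exact hs.2)
    have := hclosed.closure_subset_iff.2 hsub
    rw [closure_Ioc ht₀.ne] at this
    exact this ⟨le_rfl, ht₀.le⟩
  · exact h t (abs_pos.2 ht0) ht

theorem exists_abs_le_add_mul_abs (hP : Continuous P) {δ : ℝ} (hδ : 0 ≤ δ)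
    (h : ∃ T, ∀ t, T ≤ |t| → |P t| ≤ δ * |Q t|) : ∃ M ≥ 0, ∀ t, |P t| ≤ M + δ * |Q t| := by
  obtain ⟨T, hT⟩ := h
  obtain ⟨M, hM⟩ := (isCompact_Icc (a := -T) (b := T)).exists_bound_of_continuousOn hP.continuousOn
  refine ⟨max M 0, le_max_right _ _, fun t => ?_⟩
  rcases le_or_gt T |t| with hTt | hTt
  · linarith [hT t hTt, le_max_right M 0]
  · have := hM t (abs_le.1 hTt.le)
    rw [Real.norm_eq_abs] at this
    nlinarith [le_max_left M 0, abs_nonneg (Q t)]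

theorem exists_abs_mul_le_add_mul_abs {E : Type*} [NormedAddCommGroup E] [MeasurableSpace E]
    [OpensMeasurableSpace E] {μ : Measure E} (hP : Continuous P) (hQ : Continuous Q)
    {δ : ℝ} (hδ : 0 ≤ δ) (hinf : ∃ T, ∀ t, T ≤ |t| → |P t| ≤ δ * |Q t|)
    (hzero : ∃ t₀ > 0, ∀ t, 0 < |t| → |t| ≤ t₀ → |P t| ≤ δ * |Q t|)
    {v : ℕ → E → ℝ} {z : E → ℝ} (hz : ∀ ρ, IntegrableOn z (Metric.ball 0 ρ) μ)
    (hv : ∀ ε > 0, ∃ ρ, ∀ n x, ρ ≤ ‖x‖ → |v n x| ≤ ε) :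
    ∃ m : E → ℝ, 0 ≤ m ∧ Integrable m μ ∧
      ∀ n x, |P (v n x) * z x| ≤ m x + δ * |Q (v n x) * z x| := by
  obtain ⟨M, hM0, hM⟩ := exists_abs_le_add_mul_abs hP hδ hinf
  obtain ⟨t₀, ht₀, hsmall⟩ := hzero
  obtain ⟨ρ, hρ⟩ := hv t₀ ht₀
  refine ⟨(Metric.ball 0 ρ).indicator fun x => M * |z x|,
    Set.indicator_nonneg fun x _ => by positivity,
    (integrable_indicator_iff measurableSet_ball).2 ((hz ρ).norm.const_mul M), fun n x => ?_⟩
  rw [abs_mul, abs_mul, ← mul_assoc]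
  by_cases hx : x ∈ Metric.ball 0 ρ
  · rw [Set.indicator_of_mem hx, ← add_mul]
    exact mul_le_mul_of_nonneg_right (hM _) (abs_nonneg _)
  · rw [Set.indicator_of_notMem hx, zero_add]
    refine mul_le_mul_of_nonneg_right (abs_le_mul_abs_of_abs_le hP hQ ht₀ hsmall (hρ n x ?_))
      (abs_nonneg _)
    simpa using hx

end

theorem stmt_1_general (N : ℕ) (P Q : ℝ → ℝ)
    (hP : Continuous P) (hQ : Continuous Q)
    (hPQ : ∀ ε > (0:ℝ), ∃ T > (0:ℝ), ∀ t : ℝ, T ≤ |t| → |P t| ≤ ε * |Q t|)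
    (hPQ0 : ∀ ε > (0:ℝ), ∃ t₀ > (0:ℝ), ∀ t : ℝ, 0 < |t| → |t| ≤ t₀ → |P t| ≤ ε * |Q t|)
    (v : ℕ → EuclideanSpace ℝ (Fin N) → ℝ) (vlim z : EuclideanSpace ℝ (Fin N) → ℝ)
    (hv : ∀ n, Measurable (v n)) (hvlim : Measurable vlim) (hz : Measurable z)
    (hzloc : ∀ Ω : Set (EuclideanSpace ℝ (Fin N)), MeasurableSet Ω → Bornology.IsBounded Ω →
      IntegrableOn z Ω volume)
    (hsup : ∃ C : ℝ≥0∞, C < ⊤ ∧ ∀ n, ∫⁻ x, ‖Q (v n x) * z x‖₊ ∂volume ≤ C)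
    (hae : ∀ᵐ x ∂volume, Tendsto (fun n => P (v n x)) atTop (𝓝 (vlim x)))
    (hvan : ∀ ε > (0:ℝ), ∃ ρ > (0:ℝ), ∀ n, ∀ x : EuclideanSpace ℝ (Fin N),
      ρ ≤ ‖x‖ → |v n x| ≤ ε) :
    Tendsto (fun n => ∫ x, |P (v n x) - vlim x| * |z x| ∂volume) atTop (𝓝 0) := by
  obtain ⟨C, hC, hQz⟩ := hsup
  have hF n : AEStronglyMeasurable (fun x => P (v n x) * z x) volume :=
    ((hP.measurable.comp (hv n)).mul hz).aestronglyMeasurable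
  have hlim : ∀ᵐ x ∂volume, Tendsto (fun n => P (v n x) * z x) atTop (𝓝 (vlim x * z x)) := by
    filter_upwards [hae] with x hx using hx.mul_const _
  have hL1 := tendsto_lintegral_enorm_sub_of_abs_le_add_mul hF hlim hC.ne hQz fun δ hδ =>
    exists_abs_mul_le_add_mul_abs hP hQ hδ.le ((hPQ δ hδ).imp fun _ h => h.2) (hPQ0 δ hδ)
      (fun _ => hzloc _ measurableSet_ball Metric.isBounded_ball)
      fun ε hε => (hvan ε hε).imp fun _ h => h.2
  have hint n : ∫ x, |P (v n x) - vlim x| * |z x| ∂volume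
      = (∫⁻ x, ‖P (v n x) * z x - vlim x * z x‖ₑ ∂volume).toReal := by
    have hdiff : AEStronglyMeasurable (fun x => P (v n x) * z x - vlim x * z x) volume :=
      (hF n).sub (hvlim.mul hz).aestronglyMeasurable
    rw [← integral_norm_eq_lintegral_enorm hdiff]
    simp only [← sub_mul, norm_mul, Real.norm_eq_abs]
  simpa only [hint, Function.comp_def, ENNReal.toReal_zero] using
    (ENNReal.tendsto_toReal zero_ne_top).comp hL1

theorem stmt_1 (N : ℕ) (hN : 1 ≤ N) (P Q : ℝ → ℝ)
    (hP : Continuous P) (hQ : Continuous Q)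
    (hPQ : ∀ ε > (0:ℝ), ∃ T > (0:ℝ), ∀ t : ℝ, T ≤ |t| → |P t| ≤ ε * |Q t|)
    (hPQ0 : ∀ ε > (0:ℝ), ∃ t₀ > (0:ℝ), ∀ t : ℝ, 0 < |t| → |t| ≤ t₀ → |P t| ≤ ε * |Q t|)
    (v : ℕ → EuclideanSpace ℝ (Fin N) → ℝ) (vlim z : EuclideanSpace ℝ (Fin N) → ℝ)
    (hv : ∀ n, Measurable (v n)) (hvlim : Measurable vlim) (hz : Measurable z)
    (hzloc : ∀ Ω : Set (EuclideanSpace ℝ (Fin N)), MeasurableSet Ω → Bornology.IsBounded Ω →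
      IntegrableOn z Ω volume)
    (hsup : ∃ C : ℝ≥0∞, C < ⊤ ∧ ∀ n, ∫⁻ x, ‖Q (v n x) * z x‖₊ ∂volume ≤ C)
    (hae : ∀ᵐ x ∂volume, Tendsto (fun n => P (v n x)) atTop (𝓝 (vlim x)))
    (hvan : ∀ ε > (0:ℝ), ∃ ρ > (0:ℝ), ∀ n, ∀ x : EuclideanSpace ℝ (Fin N),
      ρ ≤ ‖x‖ → |v n x| ≤ ε) :
    Tendsto (fun n => ∫ x, |P (v n x) - vlim x| * |z x| ∂volume) atTop (𝓝 0) :=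
  stmt_1_general N P Q hP hQ hPQ hPQ0 v vlim z hv hvlim hz hzloc hsup hae hvan
end

section
/- Let f : ℝ → ℝ be continuous and odd. Set ν := −(1/2)·limsup_{t→0} f(t)/t and assume 0 < ν < +∞. Assume moreover that for every α > 0, f(t)/e^{αt²} → 0 as t → +∞. Then for every α > 0 there exists a constant C_α > 0 such that f(t) ≤ −ν·t + C_α·t⁷·e^{αt²} for all t ≥ 0, and consequently F(t) ≤ −(ν/2)·t² + (C_α/(2α))·t⁶·(e^{αt²} − 1) for all t ∈ ℝ. -/
open Filter Topology Asymptotics Set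

/-!
Near `0` the limsup hypothesis gives `f t < -ν t`, and at infinity `f t + ν t` is
`O(t⁷ e^{αt²})`; on the compact range in between the continuous quotient
`(f t + ν t) / (t⁷ e^{αt²})` is bounded. Integrating the pointwise bound uses
`τ⁷ ≤ t⁶ τ` and the primitive `e^{ατ²} / (2α)` of `τ e^{ατ²}`; for `t < 0`, oddness of `f`
makes `F` even.
-/

/-- An unbounded `limsup` in `ℝ` takes the junk value `sInf ∅ = 0`. -/
theorem Real.isBoundedUnder_le_of_limsup_ne_zero {α : Type*} {l : Filter α} {u : α → ℝ}
    (h : limsup u l ≠ 0) : l.IsBoundedUnder (· ≤ ·) u := by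
  by_contra hu
  have hempty : {b : ℝ | ∀ᶠ x in l, u x ≤ b} = ∅ :=
    eq_empty_iff_forall_notMem.mpr fun b hb => hu ⟨b, hb⟩
  exact h (by rw [limsup_eq, hempty, Real.sInf_empty])

theorem exists_le_const_mul_of_isBigO {g w : ℝ → ℝ} (hg : Continuous g) (hw : Continuous w)
    (hw_nonneg : ∀ t, 0 ≤ t → 0 ≤ w t) (hw_pos : ∀ t, 0 < t → 0 < w t) (hg0 : g 0 ≤ 0)
    (h_near : ∀ᶠ t in 𝓝[>] 0, g t ≤ 0) (h_atTop : g =O[atTop] w) :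
    ∃ C > 0, ∀ t, 0 ≤ t → g t ≤ C * w t := by
  obtain ⟨δ, hδ, hδg⟩ := mem_nhdsGT_iff_exists_Ioo_subset.mp h_near
  obtain ⟨K, hK⟩ := h_atTop.bound
  obtain ⟨T, hT⟩ := eventually_atTop.mp hK
  have hcont : ContinuousOn (fun t => g t / w t) (Icc δ T) :=
    hg.continuousOn.div hw.continuousOn fun t ht => (hw_pos t (hδ.trans_le ht.1)).ne'
  obtain ⟨M, hM⟩ := isCompact_Icc.bddAbove_image hcont
  refine ⟨max (max K M) 1, by positivity, fun t ht => ?_⟩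
  have hwt := hw_nonneg t ht
  have hC_nonneg : 0 ≤ max (max K M) 1 * w t := by positivity
  rcases ht.eq_or_lt with rfl | ht0
  · linarith
  rcases lt_or_ge t δ with htδ | hδt
  · have hgt : g t ≤ 0 := hδg ⟨ht0, htδ⟩
    linarith
  rcases le_or_gt t T with htT | hTt
  · have hwt' := hw_pos t ht0
    calc g t = g t / w t * w t := by field_simp
      _ ≤ M * w t := by gcongr; exact hM ⟨t, ⟨hδt, htT⟩, rfl⟩
      _ ≤ max (max K M) 1 * w t := by gcongr; exact (le_max_right K M).trans (le_max_left _ _)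
  · calc g t ≤ ‖g t‖ := le_abs_self _
      _ ≤ K * ‖w t‖ := hT t hTt.le
      _ = K * w t := by rw [Real.norm_of_nonneg hwt]
      _ ≤ max (max K M) 1 * w t := by gcongr; exact (le_max_left K M).trans (le_max_left _ _)

theorem integral_mul_exp_mul_sq {α : ℝ} (hα : α ≠ 0) (s : ℝ) :
    ∫ τ in (0:ℝ)..s, τ * Real.exp (α * τ ^ 2) = (Real.exp (α * s ^ 2) - 1) / (2 * α) := by
  have hderiv : ∀ x ∈ uIcc (0:ℝ) s,
      HasDerivAt (fun y => Real.exp (α * y ^ 2) / (2 * α)) (x * Real.exp (α * x ^ 2)) x := by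
    intro x _
    refine (((hasDerivAt_pow 2 x).const_mul α).exp.div_const (2 * α)).congr_deriv ?_
    field_simp
    ring
  rw [intervalIntegral.integral_eq_sub_of_hasDerivAt hderiv
    (Continuous.intervalIntegrable (by fun_prop) _ _)]
  simp [sub_div]

theorem integral_pow_succ_mul_exp_mul_sq_le {α s : ℝ} (hα : α ≠ 0) (hs : 0 ≤ s) (n : ℕ) :
    ∫ τ in (0:ℝ)..s, τ ^ (n + 1) * Real.exp (α * τ ^ 2)
      ≤ s ^ n * ((Real.exp (α * s ^ 2) - 1) / (2 * α)) := by
  rw [← integral_mul_exp_mul_sq hα, ← intervalIntegral.integral_const_mul]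
  refine intervalIntegral.integral_mono_on hs (Continuous.intervalIntegrable (by fun_prop) _ _)
    (Continuous.intervalIntegrable (by fun_prop) _ _) fun τ hτ => ?_
  obtain ⟨hτ0, hτs⟩ := hτ
  rw [pow_succ, mul_assoc]
  gcongr

theorem intervalIntegral.integral_zero_neg_of_odd {f : ℝ → ℝ} (hodd : ∀ t, f (-t) = -f t)
    (t : ℝ) :
    ∫ x in (0:ℝ)..-t, f x = ∫ x in (0:ℝ)..t, f x := by
  have h := intervalIntegral.integral_comp_neg (a := 0) (b := t) f
  simp only [hodd, intervalIntegral.integral_neg, neg_zero] at h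
  rw [intervalIntegral.integral_symm 0 (-t)] at h
  linarith

theorem eventually_add_mul_nonpos_of_limsup_div {f : ℝ → ℝ} {ν : ℝ}
    (hν : ν = -(1/2) * limsup (fun t => f t / t) (𝓝[≠] (0:ℝ))) (hνpos : 0 < ν) :
    ∀ᶠ t in 𝓝[>] 0, f t + ν * t ≤ 0 := by
  have hlim : limsup (fun t => f t / t) (𝓝[≠] (0:ℝ)) = -2 * ν := by linarith
  have hev : ∀ᶠ t in 𝓝[≠] (0:ℝ), f t / t < -ν :=
    eventually_lt_of_limsup_lt (by linarith)
      (Real.isBoundedUnder_le_of_limsup_ne_zero (by rw [hlim]; linarith))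
  filter_upwards [nhdsGT_le_nhdsNE 0 hev, self_mem_nhdsWithin] with t ht (htpos : 0 < t)
  rw [div_lt_iff₀ htpos] at ht
  linarith

theorem isBigO_add_mul_of_tendsto_div_exp {f : ℝ → ℝ} {α : ℝ} (hα : 0 ≤ α)
    (hgrow : Tendsto (fun t => f t / Real.exp (α * t ^ 2)) atTop (𝓝 0)) (ν : ℝ) {n : ℕ}
    (hn : n ≠ 0) :
    (fun t => f t + ν * t) =O[atTop] fun t => t ^ n * Real.exp (α * t ^ 2) := by
  have hf : f =o[atTop] fun t => Real.exp (α * t ^ 2) :=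
    (isLittleO_iff_tendsto fun t h => absurd h (Real.exp_pos _).ne').mpr hgrow
  have hexp :
      (fun t => Real.exp (α * t ^ 2)) =O[atTop] fun t => t ^ n * Real.exp (α * t ^ 2) := by
    refine IsBigO.of_bound 1 ?_
    filter_upwards [eventually_ge_atTop 1] with t ht
    rw [one_mul, norm_mul, norm_pow, Real.norm_of_nonneg (by linarith : (0:ℝ) ≤ t)]
    exact le_mul_of_one_le_left (norm_nonneg _) (one_le_pow₀ ht)
  have hid : (fun t : ℝ => t) =O[atTop] fun t => t ^ n * Real.exp (α * t ^ 2) := by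
    refine IsBigO.of_bound 1 ?_
    filter_upwards [eventually_ge_atTop 1] with t ht
    rw [one_mul, norm_mul, norm_pow, Real.norm_of_nonneg (by linarith : (0:ℝ) ≤ t),
      Real.norm_of_nonneg (Real.exp_pos _).le]
    calc t ≤ t ^ n := le_self_pow₀ ht hn
      _ ≤ t ^ n * Real.exp (α * t ^ 2) :=
        le_mul_of_one_le_right (pow_nonneg (by linarith) n) (Real.one_le_exp (by positivity))
  exact (hf.trans_isBigO hexp).isBigO.add (hid.const_mul_left ν)

theorem integral_le_of_le_neg_mul_add {f : ℝ → ℝ} (hf : Continuous f) {ν α C s : ℝ}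
    (hα : α ≠ 0) (hC : 0 ≤ C) (hs : 0 ≤ s)
    (hbound : ∀ t, 0 ≤ t → f t ≤ -ν * t + C * t ^ 7 * Real.exp (α * t ^ 2)) :
    ∫ τ in (0:ℝ)..s, f τ ≤
      -(ν / 2) * s ^ 2 + (C / (2 * α)) * s ^ 6 * (Real.exp (α * s ^ 2) - 1) := by
  calc ∫ τ in (0:ℝ)..s, f τ
      ≤ ∫ τ in (0:ℝ)..s, (-ν * τ + C * (τ ^ 7 * Real.exp (α * τ ^ 2))) :=
        intervalIntegral.integral_mono_on hs (hf.intervalIntegrable _ _)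
          (Continuous.intervalIntegrable (by fun_prop) _ _) fun τ hτ => by
            linarith [hbound τ hτ.1]
    _ = -ν * (s ^ 2 / 2) + C * ∫ τ in (0:ℝ)..s, τ ^ 7 * Real.exp (α * τ ^ 2) := by
        rw [intervalIntegral.integral_add (Continuous.intervalIntegrable (by fun_prop) _ _)
          (Continuous.intervalIntegrable (by fun_prop) _ _), intervalIntegral.integral_const_mul,
          intervalIntegral.integral_const_mul, integral_id]
        ring
    _ ≤ -ν * (s ^ 2 / 2) + C * (s ^ 6 * ((Real.exp (α * s ^ 2) - 1) / (2 * α))) := by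
        gcongr
        exact integral_pow_succ_mul_exp_mul_sq_le hα hs 6
    _ = -(ν / 2) * s ^ 2 + (C / (2 * α)) * s ^ 6 * (Real.exp (α * s ^ 2) - 1) := by ring

theorem stmt_4 (f : ℝ → ℝ) (hf : Continuous f)
    (hodd : ∀ t, f (-t) = -f t) (ν : ℝ)
    (hν : ν = -(1/2) * Filter.limsup (fun t => f t / t) (𝓝[≠] (0:ℝ)))
    (hνpos : 0 < ν)
    (hgrow : ∀ α > (0:ℝ), Tendsto (fun t : ℝ => f t / Real.exp (α * t^2)) atTop (𝓝 0)) :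
    ∀ α > (0:ℝ), ∃ C > (0:ℝ),
      (∀ t : ℝ, 0 ≤ t → f t ≤ -ν * t + C * t^7 * Real.exp (α * t^2)) ∧
      ∀ t : ℝ, (∫ τ in (0:ℝ)..t, f τ) ≤
        -(ν/2) * t^2 + (C/(2*α)) * t^6 * (Real.exp (α * t^2) - 1) := by
  intro α hα
  have hf0 : f 0 = 0 := by
    have h := hodd 0
    rw [neg_zero] at h
    linarith
  obtain ⟨C, hC, hbound⟩ := exists_le_const_mul_of_isBigO (g := fun t => f t + ν * t)
    (w := fun t => t ^ 7 * Real.exp (α * t ^ 2)) (by fun_prop) (by fun_prop)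
    (fun t ht => by positivity) (fun t ht => by positivity) (by simp [hf0])
    (eventually_add_mul_nonpos_of_limsup_div hν hνpos)
    (isBigO_add_mul_of_tendsto_div_exp hα.le (hgrow α hα) ν (by norm_num))
  have hpoint : ∀ t : ℝ, 0 ≤ t → f t ≤ -ν * t + C * t ^ 7 * Real.exp (α * t ^ 2) :=
    fun t ht => by linarith [hbound t ht]
  refine ⟨C, hC, hpoint, fun t => ?_⟩
  rcases le_total 0 t with ht | ht
  · exact integral_le_of_le_neg_mul_add hf hα.ne' hC.le ht hpoint
  · have h := integral_le_of_le_neg_mul_add hf hα.ne' hC.le (neg_nonneg.mpr ht) hpoint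
    rwa [intervalIntegral.integral_zero_neg_of_odd hodd, neg_sq, Even.neg_pow (by decide)] at h
end

section
/- Let f : ℝ → ℝ be continuous and odd with −∞ < liminf_{t→0} f(t)/t and limsup_{t→0} f(t)/t < 0, and set ν := −(1/2)·limsup_{t→0} f(t)/t ∈ (0, +∞). Define f₁(t) := max{f(t) + 2νt, 0} for t ≥ 0 and f₁(t) := min{f(t) + 2νt, 0} for t < 0, and define f₂ := f₁ − f. Then: f₁ and f₂ are continuous and odd on ℝ; lim_{t→0} f₁(t)/t = 0; f₂(t)·t ≥ 2ν·t² for all t ∈ ℝ; and 2ν = liminf_{t→0} f₂(t)/t ≤ limsup_{t→0} f₂(t)/t < +∞. -/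
/-!
With `g t = f t + 2νt`, `f₁` keeps `g t` where it has the sign of `t` and is `0` elsewhere,
so `f₁ t / t = max (f t / t + 2ν) 0` and `f₂ t / t = max (2ν) (-(f t / t))` for `t ≠ 0`.
The first tends to `0` because `limsup f(t)/t = -2ν`; for the second, the continuous antitone
map `y ↦ max (2ν) (-y)` turns that limsup into `liminf f₂(t)/t = 2ν`.
-/

open Filter Topology

noncomputable def sameSignPart (g : ℝ → ℝ) (t : ℝ) : ℝ :=
  if 0 ≤ t then max (g t) 0 else min (g t) 0

section SameSignPart

variable {g : ℝ → ℝ}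

theorem continuous_sameSignPart (hg : Continuous g) (hg0 : g 0 = 0) :
    Continuous (sameSignPart g) :=
  (hg.max continuous_const).if_le (hg.min continuous_const) continuous_const continuous_id
    fun t ht => by simp [← ht, hg0]

theorem sameSignPart_neg (hodd : ∀ t, g (-t) = -g t) (t : ℝ) :
    sameSignPart g (-t) = -sameSignPart g t := by
  have hg0 : g 0 = 0 := self_eq_neg.1 (by simpa using hodd 0)
  rcases lt_trichotomy t 0 with ht | rfl | ht
  · simp [sameSignPart, hodd, ht.le, ht.not_ge, ← max_neg_neg]
  · simp [sameSignPart, hg0]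
  · simp [sameSignPart, hodd, ht.le, ht.not_ge, ← min_neg_neg]

theorem mul_le_sameSignPart_mul (g : ℝ → ℝ) (t : ℝ) : g t * t ≤ sameSignPart g t * t := by
  unfold sameSignPart
  split_ifs with ht
  · exact mul_le_mul_of_nonneg_right (le_max_left _ _) ht
  · exact mul_le_mul_of_nonpos_right (min_le_left _ _) (not_le.1 ht).le

theorem sameSignPart_div (g : ℝ → ℝ) {t : ℝ} (ht : t ≠ 0) :
    sameSignPart g t / t = max (g t / t) 0 := by
  unfold sameSignPart
  rcases ht.lt_or_gt with ht | ht
  · rw [if_neg ht.not_ge, ← max_div_div_right_of_nonpos ht.le, zero_div]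
  · rw [if_pos ht.le, ← max_div_div_right ht.le, zero_div]

theorem sameSignPart_add_mul_div (f : ℝ → ℝ) (c : ℝ) {t : ℝ} (ht : t ≠ 0) :
    sameSignPart (fun s => f s + c * s) t / t = max (f t / t + c) 0 := by
  rw [sameSignPart_div _ ht, add_div, mul_div_cancel_right₀ _ ht]

theorem sameSignPart_add_mul_sub_div (f : ℝ → ℝ) (c : ℝ) {t : ℝ} (ht : t ≠ 0) :
    (sameSignPart (fun s => f s + c * s) t - f t) / t = max c (-(f t / t)) := by
  rw [sub_div, sameSignPart_add_mul_div f c ht, ← max_sub_sub_right, add_sub_cancel_left,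
    zero_sub]

end SameSignPart

section Limits

variable {α : Type*} {l : Filter α} {u : α → ℝ} {c : ℝ}

theorem tendsto_max_add_zero_of_limsup_add_nonpos (hu : IsBoundedUnder (· ≤ ·) l u)
    (hc : limsup u l + c ≤ 0) : Tendsto (fun x => max (u x + c) 0) l (𝓝 0) :=
  tendsto_order.2
    ⟨fun _ ha => Eventually.of_forall fun _ => ha.trans_le (le_max_right _ _),
      fun a ha => (eventually_lt_of_limsup_lt (by linarith : limsup u l < a - c) hu).mono
        fun _ hx => max_lt (by linarith) ha⟩

theorem liminf_max_neg [NeBot l] (hu : IsBoundedUnder (· ≤ ·) l u)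
    (hu' : IsBoundedUnder (· ≥ ·) l u) :
    liminf (fun x => max c (-u x)) l = max c (-limsup u l) := by
  have hanti : Antitone fun y : ℝ => max c (-y) := fun _ _ h => max_le_max le_rfl (neg_le_neg h)
  exact (hanti.map_limsup_of_continuousAt u (by fun_prop) hu hu'.isCoboundedUnder_le).symm

end Limits

theorem stmt_11 (f : ℝ → ℝ) (hf : Continuous f) (hodd : ∀ t, f (-t) = -f t)
    (hbdd_below : Filter.IsBoundedUnder (· ≥ ·) (𝓝[≠] (0:ℝ)) (fun t => f t / t))
    (hbdd_above : Filter.IsBoundedUnder (· ≤ ·) (𝓝[≠] (0:ℝ)) (fun t => f t / t))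
    (hlimsup : Filter.limsup (fun t => f t / t) (𝓝[≠] (0:ℝ)) < 0)
    (ν : ℝ) (hν : ν = -(1/2) * Filter.limsup (fun t => f t / t) (𝓝[≠] (0:ℝ)))
    (f₁ f₂ : ℝ → ℝ)
    (hf₁ : ∀ t, f₁ t = if 0 ≤ t then max (f t + 2*ν*t) 0 else min (f t + 2*ν*t) 0)
    (hf₂ : ∀ t, f₂ t = f₁ t - f t) :
    0 < ν ∧
    Continuous f₁ ∧ (∀ t, f₁ (-t) = -f₁ t) ∧
    Continuous f₂ ∧ (∀ t, f₂ (-t) = -f₂ t) ∧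
    Tendsto (fun t => f₁ t / t) (𝓝[≠] (0:ℝ)) (𝓝 0) ∧
    (∀ t : ℝ, 2*ν*t^2 ≤ f₂ t * t) ∧
    Filter.liminf (fun t => f₂ t / t) (𝓝[≠] (0:ℝ)) = 2*ν ∧
    Filter.liminf (fun t => f₂ t / t) (𝓝[≠] (0:ℝ)) ≤
      Filter.limsup (fun t => f₂ t / t) (𝓝[≠] (0:ℝ)) ∧
    Filter.IsBoundedUnder (· ≤ ·) (𝓝[≠] (0:ℝ)) (fun t => f₂ t / t) := by
  have hν₀ : 0 < ν := by rw [hν]; linarith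
  have hlimsup_eq : limsup (fun t => f t / t) (𝓝[≠] 0) = -(2 * ν) := by rw [hν]; ring
  have hf₀ : f 0 = 0 := self_eq_neg.1 (by simpa using hodd 0)
  have hf₁_eq : f₁ = sameSignPart (fun t => f t + 2 * ν * t) := funext hf₁
  have hcont₁ : Continuous f₁ :=
    hf₁_eq ▸ continuous_sameSignPart (by fun_prop) (by simp [hf₀])
  have hodd₁ : ∀ t, f₁ (-t) = -f₁ t :=
    hf₁_eq ▸ sameSignPart_neg fun t => by rw [hodd]; ring
  have hratio₁ : (fun t => f₁ t / t) =ᶠ[𝓝[≠] 0] fun t => max (f t / t + 2 * ν) 0 :=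
    eventually_mem_nhdsWithin.mono fun _ ht => hf₁_eq ▸ sameSignPart_add_mul_div f _ ht
  have hratio₂ : (fun t => f₂ t / t) =ᶠ[𝓝[≠] 0] fun t => max (2 * ν) (-(f t / t)) :=
    eventually_mem_nhdsWithin.mono fun t ht => by
      dsimp only; rw [hf₂, hf₁_eq]; exact sameSignPart_add_mul_sub_div f _ ht
  have hbdd_above₂ := (isBoundedUnder_const.sup (isBoundedUnder_le_neg.2 hbdd_below)).mono_le
    hratio₂.le
  have hbdd_below₂ := isBoundedUnder_const.mono_ge
    (hratio₂.mono fun _ ht => (le_max_left (2 * ν) _).trans_eq ht.symm)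
  refine ⟨hν₀, hcont₁, hodd₁, (hcont₁.sub hf).congr fun t => (hf₂ t).symm,
    fun t => by simp only [hf₂, hodd₁, hodd]; ring,
    (tendsto_max_add_zero_of_limsup_add_nonpos hbdd_above (by linarith)).congr' hratio₁.symm,
    fun t => by
      rw [hf₂, hf₁_eq]; nlinarith [mul_le_sameSignPart_mul (fun s => f s + 2 * ν * s) t],
    ?_, liminf_le_limsup hbdd_above₂ hbdd_below₂, hbdd_above₂⟩
  rw [liminf_congr hratio₂, liminf_max_neg hbdd_above hbdd_below, hlimsup_eq, neg_neg, max_self]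
end

section
/- Let N ≥ 1 be an integer, c > 0, and let q : ℝ → [0, ∞) be a continuous function. Let u and (u_n)_{n≥1} be Lebesgue measurable functions from ℝ^N to ℝ such that u_n(x) → u(x) for almost every x ∈ ℝ^N, ∫_{ℝ^N} (2c·u_n(x)² + q(u_n(x))) dx < +∞ for every n, ∫_{ℝ^N} (2c·u(x)² + q(u(x))) dx < +∞, and ∫_{ℝ^N} (2c·u_n(x)² + q(u_n(x))) dx → ∫_{ℝ^N} (2c·u(x)² + q(u(x))) dx as n → +∞. Then ∫_{ℝ^N} u_n(x)² dx → ∫_{ℝ^N} u(x)² dx as n → +∞. -/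
/-!
Split `2c u² + q(u)` into its two nonnegative parts. Fatou's lemma bounds the liminf of the
integral of each part from below by the integral of its limit; since the integrals of the sums
converge, neither part can have an excess in the limsup, so the integrals of `2c uₙ²` converge.
-/

open MeasureTheory Filter Topology

lemma Filter.Tendsto.of_tendsto_add_of_forall_lt {ι : Type*} {l : Filter ι} {a b : ι → ℝ}
    {A B : ℝ} (ha : ∀ A' < A, ∀ᶠ i in l, A' < a i) (hb : ∀ B' < B, ∀ᶠ i in l, B' < b i)
    (hab : Tendsto (fun i => a i + b i) l (𝓝 (A + B))) :
    Tendsto a l (𝓝 A) := by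
  refine tendsto_order.2 ⟨ha, fun A' hA' => ?_⟩
  have hsum := (tendsto_order.1 hab).2 (A + B + (A' - A) / 2) (by linarith)
  filter_upwards [hsum, hb (B - (A' - A) / 2) (by linarith)] with i hi hbi
  linarith

section Fatou

variable {α ι : Type*} [MeasurableSpace α] {μ : Measure α} {l : Filter ι}
  [Countable ι] [l.IsCountablyGenerated] [l.NeBot]

/-- **Fatou's lemma** for real-valued integrals, in a form free of boundedness assumptions. -/
lemma eventually_lt_integral_of_tendsto_ae {f : ι → α → ℝ} {g : α → ℝ}
    (hf0 : ∀ i, 0 ≤ᵐ[μ] f i) (hfi : ∀ i, Integrable (f i) μ) (hgi : Integrable g μ)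
    (hlim : ∀ᵐ x ∂μ, Tendsto (fun i => f i x) l (𝓝 (g x))) {b : ℝ}
    (hb : b < ∫ x, g x ∂μ) :
    ∀ᶠ i in l, b < ∫ x, f i x ∂μ := by
  rcases lt_or_ge b 0 with hb0 | hb0
  · exact Eventually.of_forall fun i => hb0.trans_le (integral_nonneg_of_ae (hf0 i))
  have hg0 : 0 ≤ᵐ[μ] g := by
    have hf0' : ∀ᵐ x ∂μ, ∀ i, 0 ≤ f i x := ae_all_iff.2 hf0
    filter_upwards [hlim, hf0'] with x hx hx0
    exact ge_of_tendsto' hx hx0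
  have hfatou : ENNReal.ofReal (∫ x, g x ∂μ)
      ≤ liminf (fun i => ENNReal.ofReal (∫ x, f i x ∂μ)) l := by
    calc ENNReal.ofReal (∫ x, g x ∂μ)
        = ∫⁻ x, liminf (fun i => ENNReal.ofReal (f i x)) l ∂μ := by
          rw [ofReal_integral_eq_lintegral_ofReal hgi hg0]
          refine lintegral_congr_ae ?_
          filter_upwards [hlim] with x hx
          exact ((ENNReal.continuous_ofReal.tendsto _).comp hx).liminf_eq.symm
      _ ≤ liminf (fun i => ∫⁻ x, ENNReal.ofReal (f i x) ∂μ) l :=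
          lintegral_liminf_le' fun i => (hfi i).aemeasurable.ennreal_ofReal
      _ = liminf (fun i => ENNReal.ofReal (∫ x, f i x ∂μ)) l := by
          simp_rw [ofReal_integral_eq_lintegral_ofReal (hfi _) (hf0 _)]
  have hb' : ENNReal.ofReal b < ENNReal.ofReal (∫ x, g x ∂μ) :=
    (ENNReal.ofReal_lt_ofReal_iff_of_nonneg hb0).2 hb
  filter_upwards [eventually_lt_of_lt_liminf (hb'.trans_le hfatou)] with i hi
  exact (ENNReal.ofReal_lt_ofReal_iff_of_nonneg hb0).1 hi

lemma tendsto_integral_of_tendsto_integral_add {f g : ι → α → ℝ} {F G : α → ℝ}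
    (hf0 : ∀ i, 0 ≤ᵐ[μ] f i) (hg0 : ∀ i, 0 ≤ᵐ[μ] g i)
    (hfi : ∀ i, Integrable (f i) μ) (hgi : ∀ i, Integrable (g i) μ)
    (hFi : Integrable F μ) (hGi : Integrable G μ)
    (hf : ∀ᵐ x ∂μ, Tendsto (fun i => f i x) l (𝓝 (F x)))
    (hg : ∀ᵐ x ∂μ, Tendsto (fun i => g i x) l (𝓝 (G x)))
    (hfg : Tendsto (fun i => ∫ x, f i x + g i x ∂μ) l (𝓝 (∫ x, F x + G x ∂μ))) :
    Tendsto (fun i => ∫ x, f i x ∂μ) l (𝓝 (∫ x, F x ∂μ)) := by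
  rw [integral_add hFi hGi] at hfg
  simp_rw [integral_add (hfi _) (hgi _)] at hfg
  exact .of_tendsto_add_of_forall_lt
    (fun _ => eventually_lt_integral_of_tendsto_ae hf0 hfi hFi hf)
    (fun _ => eventually_lt_integral_of_tendsto_ae hg0 hgi hGi hg) hfg

end Fatou

theorem stmt_12_general (N : ℕ) (c : ℝ) (hc : 0 < c) (q : ℝ → ℝ)
    (hq : Continuous q) (hq0 : ∀ t, 0 ≤ q t)
    (u : EuclideanSpace ℝ (Fin N) → ℝ) (un : ℕ → EuclideanSpace ℝ (Fin N) → ℝ)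
    (hm : ∀ n, Measurable (un n)) (hmu : Measurable u)
    (hae : ∀ᵐ x ∂volume, Tendsto (fun n => un n x) atTop (𝓝 (u x)))
    (hint : ∀ n, Integrable (fun x => 2*c*(un n x)^2 + q (un n x)) volume)
    (hintu : Integrable (fun x => 2*c*(u x)^2 + q (u x)) volume)
    (hconv : Tendsto (fun n => ∫ x, (2*c*(un n x)^2 + q (un n x)) ∂volume) atTop
      (𝓝 (∫ x, (2*c*(u x)^2 + q (u x)) ∂volume))) :
    Tendsto (fun n => ∫ x, (un n x)^2 ∂volume) atTop (𝓝 (∫ x, (u x)^2 ∂volume)) := by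
  have hsq0 : ∀ v : EuclideanSpace ℝ (Fin N) → ℝ, 0 ≤ᵐ[volume] fun x => 2*c*(v x)^2 :=
    fun v => .of_forall fun x => by positivity
  have hq0' : ∀ v : EuclideanSpace ℝ (Fin N) → ℝ, 0 ≤ᵐ[volume] fun x => q (v x) :=
    fun v => .of_forall fun x => hq0 _
  have hsqm : ∀ v : EuclideanSpace ℝ (Fin N) → ℝ, Measurable v →
      AEStronglyMeasurable (fun x => 2*c*(v x)^2) volume :=
    fun v hv => ((hv.pow_const 2).const_mul _).aestronglyMeasurable
  have hlim := tendsto_integral_of_tendsto_integral_add (fun n => hsq0 (un n))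
    (fun n => hq0' (un n))
    (fun n => integrable_left_of_integrable_add_of_nonneg (hsqm _ (hm n)) (hsq0 _) (hq0' _)
      (hint n))
    (fun n => integrable_right_of_integrable_add_of_nonneg (hsqm _ (hm n)) (hsq0 _) (hq0' _)
      (hint n))
    (integrable_left_of_integrable_add_of_nonneg (hsqm _ hmu) (hsq0 _) (hq0' _) hintu)
    (integrable_right_of_integrable_add_of_nonneg (hsqm _ hmu) (hsq0 _) (hq0' _) hintu)
    (hae.mono fun x hx => (hx.pow 2).const_mul _) (hae.mono fun x hx => (hq.tendsto _).comp hx)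
    hconv
  simp_rw [integral_const_mul] at hlim
  simpa only [inv_mul_cancel_left₀ (by positivity : (2*c : ℝ) ≠ 0)] using
    hlim.const_mul (2*c)⁻¹

theorem stmt_12 (N : ℕ) (hN : 1 ≤ N) (c : ℝ) (hc : 0 < c) (q : ℝ → ℝ)
    (hq : Continuous q) (hq0 : ∀ t, 0 ≤ q t)
    (u : EuclideanSpace ℝ (Fin N) → ℝ) (un : ℕ → EuclideanSpace ℝ (Fin N) → ℝ)
    (hm : ∀ n, Measurable (un n)) (hmu : Measurable u)
    (hae : ∀ᵐ x ∂volume, Tendsto (fun n => un n x) atTop (𝓝 (u x)))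
    (hint : ∀ n, Integrable (fun x => 2*c*(un n x)^2 + q (un n x)) volume)
    (hintu : Integrable (fun x => 2*c*(u x)^2 + q (u x)) volume)
    (hconv : Tendsto (fun n => ∫ x, (2*c*(un n x)^2 + q (un n x)) ∂volume) atTop
      (𝓝 (∫ x, (2*c*(u x)^2 + q (u x)) ∂volume))) :
    Tendsto (fun n => ∫ x, (un n x)^2 ∂volume) atTop (𝓝 (∫ x, (u x)^2 ∂volume)) :=
  stmt_12_general N c hc q hq hq0 u un hm hmu hae hint hintu hconv
end

section
/- Let f : ℝ → ℝ be continuous and odd, let ν > 0 with limsup_{t→0⁺} f(t)/t < −ν, and let p₀ > 1. Define h(t) := max{νt + f(t), 0} for t ≥ 0 and h(t) := min{νt + f(t), 0} for t < 0; define h̄(t) := t^{p₀}·sup_{0 < τ ≤ t} h(τ)/τ^{p₀} for t > 0, h̄(0) := 0, h̄(t) := −h̄(−t) for t < 0; and set H̄(t) := ∫₀ᵗ h̄(τ) dτ. Then: (a) there exists δ > 0 such that h(t) = h̄(t) = 0 for all t with |t| ≤ δ; (b) (1/2)·ν·t² + F(t) ≤ H̄(t) for all t ∈ ℝ; (c)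 0 ≤ (p₀ + 1)·H̄(t) ≤ h̄(t)·t for all t ∈ ℝ. -/
/-!
Since `limsup f(t)/t < -ν`, `νt + f(t) ≤ 0` on some `(0, δ]`, so `h` vanishes on `[-δ, δ]`, and
then so does every quotient `h(τ)/τ^p₀` with `τ ≤ δ`; this also makes `h̄` finite and
`M(t) = sup_{(0,t]} h(τ)/τ^p₀` nonnegative and nondecreasing. For `t > 0`,
`νt + f(t) ≤ h(t) ≤ h̄(t)` integrates to (b), and `h̄(τ) ≤ τ^p₀ M(t)` for `τ ≤ t` integrates to
`∫₀ᵗ h̄ ≤ t^(p₀+1) M(t)/(p₀+1) = h̄(t) t/(p₀+1)`, which is (c). Both sides of (b) and (c) are even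
in `t` because `f` and `h̄` are odd, so negative `t` reduce to positive ones.
-/

open Filter Topology Set intervalIntegral

/- An unbounded `limsup` in `ℝ` is the junk value `sInf ∅ = 0`, which `b ≤ 0` excludes. -/
theorem Real.eventually_lt_of_limsup_lt_of_nonpos {α : Type*} {l : Filter α} {u : α → ℝ} {b : ℝ}
    (h : limsup u l < b) (hb : b ≤ 0) : ∀ᶠ x in l, u x < b := by
  refine eventually_lt_of_limsup_lt h ?_
  by_contra hu
  have : {a | ∀ᶠ x in l, u x ≤ a} = ∅ := eq_empty_iff_forall_notMem.2 fun a ha => hu ⟨a, ha⟩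
  rw [limsup_eq, this, Real.sInf_empty] at h
  linarith

theorem exists_add_nonpos_of_limsup_div_lt {f : ℝ → ℝ} {ν : ℝ} (hν : 0 < ν)
    (h : limsup (fun t => f t / t) (𝓝[>] 0) < -ν) :
    ∃ δ > 0, ∀ τ ∈ Ioc 0 δ, ν * τ + f τ ≤ 0 := by
  obtain ⟨δ, hδ, hsub⟩ := mem_nhdsGT_iff_exists_Ioc_subset.1
    (Real.eventually_lt_of_limsup_lt_of_nonpos h (by linarith))
  refine ⟨δ, hδ, fun τ hτ => ?_⟩
  have := (div_lt_iff₀ hτ.1).1 (hsub hτ)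
  linarith

theorem intervalIntegral.integral_zero_neg_of_odd_s15 {φ : ℝ → ℝ} (hφ : ∀ t, φ (-t) = -φ t) (t : ℝ) :
    ∫ τ in 0..-t, φ τ = ∫ τ in 0..t, φ τ := by
  have hφ' : φ = fun τ => -φ (-τ) := funext fun τ => by rw [hφ, neg_neg]
  conv_lhs => rw [hφ']
  rw [integral_neg, integral_comp_neg, neg_zero, neg_neg, integral_symm, neg_neg]

/- `envelope g p` is the paper's `h̄` on `[0, ∞)` for `g = h`; for `t ≤ 0` the supremum is over
the empty set and `ratioSup` takes the junk value `sSup ∅ = 0`, which makes `envelope g p 0 = 0`. -/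
noncomputable def ratioSup (g : ℝ → ℝ) (p t : ℝ) : ℝ := sSup ((fun τ => g τ / τ ^ p) '' Ioc 0 t)

noncomputable def envelope (g : ℝ → ℝ) (p t : ℝ) : ℝ := t ^ p * ratioSup g p t

noncomputable def oddExtension (e : ℝ → ℝ) (t : ℝ) : ℝ := if 0 ≤ t then e t else -e (-t)

section Envelope

variable {g : ℝ → ℝ} {p δ t : ℝ}

theorem ratioSup_of_nonpos (ht : t ≤ 0) : ratioSup g p t = 0 := by
  rw [ratioSup, Ioc_eq_empty (not_lt.2 ht), image_empty, Real.sSup_empty]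

theorem bddAbove_ratio_image (hg : ContinuousOn g (Ioi 0)) (hδ : 0 < δ)
    (hgδ : ∀ τ ∈ Ioc 0 δ, g τ = 0) (t : ℝ) : BddAbove ((fun τ => g τ / τ ^ p) '' Ioc 0 t) := by
  have hcont : ContinuousOn (fun τ => g τ / τ ^ p) (Icc δ t) := by
    refine (hg.mono fun τ hτ => ?_).div (continuousOn_id.rpow_const fun τ hτ => ?_) fun τ hτ => ?_
    · exact hδ.trans_le hτ.1
    · exact Or.inl (hδ.trans_le hτ.1).ne'
    · exact (Real.rpow_pos_of_pos (hδ.trans_le hτ.1) p).ne'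
  obtain ⟨M, hM⟩ := isCompact_Icc.bddAbove_image hcont
  refine ⟨max M 0, ?_⟩
  rintro _ ⟨τ, hτ, rfl⟩
  rcases le_or_gt τ δ with hτδ | hτδ
  · simp [hgδ τ ⟨hτ.1, hτδ⟩]
  · exact (hM ⟨τ, ⟨hτδ.le, hτ.2⟩, rfl⟩).trans (le_max_left _ _)

theorem ratioSup_nonneg (hg : ContinuousOn g (Ioi 0)) (hδ : 0 < δ)
    (hgδ : ∀ τ ∈ Ioc 0 δ, g τ = 0) (t : ℝ) : 0 ≤ ratioSup g p t := by
  rcases le_or_gt t 0 with ht | ht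
  · rw [ratioSup_of_nonpos ht]
  · have hτ : min δ t ∈ Ioc 0 δ := ⟨lt_min hδ ht, min_le_left _ _⟩
    refine le_csSup_of_le (bddAbove_ratio_image hg hδ hgδ t)
      ⟨min δ t, ⟨hτ.1, min_le_right _ _⟩, rfl⟩ ?_
    simp [hgδ _ hτ]

theorem le_ratioSup (hg : ContinuousOn g (Ioi 0)) (hδ : 0 < δ)
    (hgδ : ∀ τ ∈ Ioc 0 δ, g τ = 0) (ht : 0 < t) : g t / t ^ p ≤ ratioSup g p t :=
  le_csSup (bddAbove_ratio_image hg hδ hgδ t) ⟨t, ⟨ht, le_rfl⟩, rfl⟩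

theorem ratioSup_mono (hg : ContinuousOn g (Ioi 0)) (hδ : 0 < δ)
    (hgδ : ∀ τ ∈ Ioc 0 δ, g τ = 0) : Monotone (ratioSup g p) := by
  intro s t hst
  rcases le_or_gt s 0 with hs | hs
  · exact (ratioSup_of_nonpos hs).trans_le (ratioSup_nonneg hg hδ hgδ t)
  · exact csSup_le_csSup (bddAbove_ratio_image hg hδ hgδ t) ((nonempty_Ioc.2 hs).image _)
      (image_mono (Ioc_subset_Ioc_right hst))

theorem ratioSup_eq_zero_of_le (hg : ContinuousOn g (Ioi 0)) (hδ : 0 < δ)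
    (hgδ : ∀ τ ∈ Ioc 0 δ, g τ = 0) (ht : t ≤ δ) : ratioSup g p t = 0 := by
  refine le_antisymm (Real.sSup_nonpos ?_) (ratioSup_nonneg hg hδ hgδ t)
  rintro _ ⟨τ, hτ, rfl⟩
  simp [hgδ τ ⟨hτ.1, hτ.2.trans ht⟩]

theorem envelope_nonneg (hg : ContinuousOn g (Ioi 0)) (hδ : 0 < δ)
    (hgδ : ∀ τ ∈ Ioc 0 δ, g τ = 0) (ht : 0 ≤ t) : 0 ≤ envelope g p t :=
  mul_nonneg (Real.rpow_nonneg ht p) (ratioSup_nonneg hg hδ hgδ t)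

theorem le_envelope (hg : ContinuousOn g (Ioi 0)) (hδ : 0 < δ)
    (hgδ : ∀ τ ∈ Ioc 0 δ, g τ = 0) (ht : 0 < t) : g t ≤ envelope g p t := by
  have htp := Real.rpow_pos_of_pos ht p
  rw [envelope, ← div_le_iff₀' htp]
  exact le_ratioSup hg hδ hgδ ht

theorem envelope_eq_zero_of_le (hg : ContinuousOn g (Ioi 0)) (hδ : 0 < δ)
    (hgδ : ∀ τ ∈ Ioc 0 δ, g τ = 0) (ht : t ≤ δ) : envelope g p t = 0 := by
  rw [envelope, ratioSup_eq_zero_of_le hg hδ hgδ ht, mul_zero]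

theorem envelope_zero : envelope g p 0 = 0 := by
  rw [envelope, ratioSup_of_nonpos le_rfl, mul_zero]

theorem monotoneOn_envelope (hg : ContinuousOn g (Ioi 0)) (hδ : 0 < δ)
    (hgδ : ∀ τ ∈ Ioc 0 δ, g τ = 0) (hp : 0 ≤ p) : MonotoneOn (envelope g p) (Ici 0) :=
  fun s hs _ _ hst => mul_le_mul (Real.rpow_le_rpow hs hst hp) (ratioSup_mono hg hδ hgδ hst)
    (ratioSup_nonneg hg hδ hgδ s) (Real.rpow_nonneg (hs.trans hst) p)

theorem intervalIntegrable_envelope (hg : ContinuousOn g (Ioi 0)) (hδ : 0 < δ)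
    (hgδ : ∀ τ ∈ Ioc 0 δ, g τ = 0) (hp : 0 ≤ p) (ht : 0 ≤ t) :
    IntervalIntegrable (envelope g p) MeasureTheory.volume 0 t :=
  ((monotoneOn_envelope hg hδ hgδ hp).mono (by simp [uIcc_of_le ht, Icc_subset_Ici_self]))
    |>.intervalIntegrable

theorem mul_integral_envelope_le (hg : ContinuousOn g (Ioi 0)) (hδ : 0 < δ)
    (hgδ : ∀ τ ∈ Ioc 0 δ, g τ = 0) (hp : 0 ≤ p) (ht : 0 ≤ t) :
    (p + 1) * ∫ τ in 0..t, envelope g p τ ≤ envelope g p t * t := by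
  have hle : ∫ τ in 0..t, envelope g p τ ≤ ∫ τ in 0..t, τ ^ p * ratioSup g p t := by
    refine integral_mono_on_of_le_Ioo ht (intervalIntegrable_envelope hg hδ hgδ hp ht)
      ((intervalIntegral.intervalIntegrable_rpow' (by linarith)).mul_const _) fun τ hτ => ?_
    exact mul_le_mul_of_nonneg_left (ratioSup_mono hg hδ hgδ hτ.2.le)
      (Real.rpow_nonneg hτ.1.le p)
  have hint : ∫ τ in 0..t, τ ^ p * ratioSup g p t = t ^ (p + 1) / (p + 1) * ratioSup g p t := by
    rw [integral_mul_const, integral_rpow (Or.inl (by linarith)), Real.zero_rpow (by linarith),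
      sub_zero]
  calc (p + 1) * ∫ τ in 0..t, envelope g p τ
      ≤ (p + 1) * (t ^ (p + 1) / (p + 1) * ratioSup g p t) := by
        rw [← hint]; exact mul_le_mul_of_nonneg_left hle (by linarith)
    _ = envelope g p t * t := by
        rw [envelope, Real.rpow_add_one' ht (by linarith)]; field_simp

theorem integral_le_integral_envelope {φ : ℝ → ℝ} (hg : ContinuousOn g (Ioi 0)) (hδ : 0 < δ)
    (hgδ : ∀ τ ∈ Ioc 0 δ, g τ = 0) (hp : 0 ≤ p) (ht : 0 ≤ t)
    (hφ : IntervalIntegrable φ MeasureTheory.volume 0 t) (hφg : ∀ τ ∈ Ioo 0 t, φ τ ≤ g τ) :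
    ∫ τ in 0..t, φ τ ≤ ∫ τ in 0..t, envelope g p τ :=
  integral_mono_on_of_le_Ioo ht hφ (intervalIntegrable_envelope hg hδ hgδ hp ht)
    fun τ hτ => (hφg τ hτ).trans (le_envelope hg hδ hgδ hτ.1)

end Envelope

section OddExtension

variable {e : ℝ → ℝ} {t : ℝ}

theorem oddExtension_neg (he : e 0 = 0) (t : ℝ) : oddExtension e (-t) = -oddExtension e t := by
  rcases lt_trichotomy t 0 with ht | rfl | ht
  · simp [oddExtension, ht.le, not_le.2 ht]
  · simp [oddExtension, he]
  · simp [oddExtension, ht.le, not_le.2 ht]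

theorem integral_oddExtension_of_nonneg (ht : 0 ≤ t) :
    ∫ τ in 0..t, oddExtension e τ = ∫ τ in 0..t, e τ :=
  integral_congr fun τ hτ => if_pos (by rw [uIcc_of_le ht] at hτ; exact hτ.1)

theorem eq_oddExtension_envelope {g b : ℝ → ℝ} {p : ℝ}
    (hpos : ∀ t : ℝ, 0 < t → b t = t ^ p * sSup ((fun τ : ℝ => g τ / τ ^ p) '' Set.Ioc 0 t))
    (hzero : b 0 = 0) (hneg : ∀ t : ℝ, t < 0 → b t = -b (-t)) :
    b = oddExtension (envelope g p) := by
  funext t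
  rcases lt_trichotomy t 0 with ht | rfl | ht
  · simp [oddExtension, not_le.2 ht, hneg t ht, hpos (-t) (neg_pos.2 ht), envelope, ratioSup]
  · simp [oddExtension, hzero, envelope_zero]
  · simp [oddExtension, ht.le, hpos t ht, envelope, ratioSup]

end OddExtension

section OddEnvelope

variable {g : ℝ → ℝ} {p δ : ℝ}

theorem integral_le_integral_oddExtension_envelope {φ : ℝ → ℝ} (hg : ContinuousOn g (Ioi 0))
    (hδ : 0 < δ) (hgδ : ∀ τ ∈ Ioc 0 δ, g τ = 0) (hp : 0 ≤ p) (hφ : Continuous φ)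
    (hφodd : ∀ t, φ (-t) = -φ t) (hφg : ∀ τ, 0 < τ → φ τ ≤ g τ) (t : ℝ) :
    ∫ τ in 0..t, φ τ ≤ ∫ τ in 0..t, oddExtension (envelope g p) τ := by
  wlog ht : 0 ≤ t generalizing t
  · simpa [integral_zero_neg_of_odd_s15 hφodd,
      integral_zero_neg_of_odd_s15 (oddExtension_neg envelope_zero)] using this (-t) (by linarith)
  rw [integral_oddExtension_of_nonneg ht]
  exact integral_le_integral_envelope hg hδ hgδ hp ht (hφ.intervalIntegrable _ _)
    fun τ hτ => hφg τ hτ.1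

theorem mul_integral_oddExtension_envelope_nonneg_and_le (hg : ContinuousOn g (Ioi 0))
    (hδ : 0 < δ) (hgδ : ∀ τ ∈ Ioc 0 δ, g τ = 0) (hp : 0 ≤ p) (t : ℝ) :
    0 ≤ (p + 1) * ∫ τ in 0..t, oddExtension (envelope g p) τ ∧
      (p + 1) * ∫ τ in 0..t, oddExtension (envelope g p) τ ≤ oddExtension (envelope g p) t * t := by
  have hodd := oddExtension_neg (envelope_zero (g := g) (p := p))
  wlog ht : 0 ≤ t generalizing t
  · simpa [integral_zero_neg_of_odd_s15 hodd, hodd] using this (-t) (by linarith)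
  rw [integral_oddExtension_of_nonneg ht, oddExtension, if_pos ht]
  exact ⟨mul_nonneg (by linarith) (integral_nonneg ht fun τ hτ => envelope_nonneg hg hδ hgδ hτ.1),
    mul_integral_envelope_le hg hδ hgδ hp ht⟩

theorem oddExtension_envelope_eq_zero_of_abs_le (hg : ContinuousOn g (Ioi 0)) (hδ : 0 < δ)
    (hgδ : ∀ τ ∈ Ioc 0 δ, g τ = 0) {t : ℝ} (ht : |t| ≤ δ) : oddExtension (envelope g p) t = 0 := by
  rw [abs_le] at ht
  unfold oddExtension
  split_ifs
  · exact envelope_eq_zero_of_le hg hδ hgδ ht.2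
  · rw [envelope_eq_zero_of_le hg hδ hgδ (by linarith), neg_zero]

end OddEnvelope

noncomputable def truncation (ν : ℝ) (f : ℝ → ℝ) (t : ℝ) : ℝ :=
  if 0 ≤ t then max (ν * t + f t) 0 else min (ν * t + f t) 0

section Truncation

variable {ν δ t : ℝ} {f : ℝ → ℝ}

theorem continuousOn_truncation (hf : Continuous f) : ContinuousOn (truncation ν f) (Ioi 0) :=
  (((continuous_const_mul ν).add hf).max continuous_const).continuousOn.congr
    fun _ hτ => if_pos (le_of_lt hτ)

theorem add_le_truncation (ht : 0 ≤ t) : ν * t + f t ≤ truncation ν f t := by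
  rw [truncation, if_pos ht]
  exact le_max_left _ _

theorem truncation_eq_zero_of_abs_le (hodd : ∀ t, f (-t) = -f t)
    (hneg : ∀ τ ∈ Ioc 0 δ, ν * τ + f τ ≤ 0) (ht : |t| ≤ δ) : truncation ν f t = 0 := by
  rcases lt_trichotomy t 0 with ht0 | rfl | ht0
  · have := hneg (-t) ⟨neg_pos.2 ht0, by rwa [abs_of_neg ht0] at ht⟩
    rw [hodd] at this
    rw [truncation, if_neg (not_le.2 ht0)]
    exact min_eq_right (by linarith)
  · have hf0 : f 0 = 0 := by linarith [neg_zero (G := ℝ) ▸ hodd 0]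
    simp [truncation, hf0]
  · rw [truncation, if_pos ht0.le]
    exact max_eq_right (hneg t ⟨ht0, by rwa [abs_of_pos ht0] at ht⟩)

end Truncation

theorem stmt_15 (f : ℝ → ℝ) (hf : Continuous f) (hodd : ∀ t, f (-t) = -f t)
    (ν : ℝ) (hνpos : 0 < ν)
    (hlimsup : Filter.limsup (fun t => f t / t) (𝓝[>] (0:ℝ)) < -ν)
    (p₀ : ℝ) (hp₀ : 1 < p₀)
    (h hbar Hbar : ℝ → ℝ)
    (hh : ∀ t, h t = if 0 ≤ t then max (ν*t + f t) 0 else min (ν*t + f t) 0)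
    (hhbar_pos : ∀ t : ℝ, 0 < t →
      hbar t = t ^ p₀ * sSup ((fun τ : ℝ => h τ / τ ^ p₀) '' Set.Ioc 0 t))
    (hhbar_zero : hbar 0 = 0)
    (hhbar_neg : ∀ t : ℝ, t < 0 → hbar t = -hbar (-t))
    (hHbar : ∀ t, Hbar t = ∫ τ in (0:ℝ)..t, hbar τ) :
    (∃ δ > (0:ℝ), ∀ t : ℝ, |t| ≤ δ → h t = 0 ∧ hbar t = 0) ∧
    (∀ t : ℝ, (1/2)*ν*t^2 + (∫ τ in (0:ℝ)..t, f τ) ≤ Hbar t) ∧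
    (∀ t : ℝ, 0 ≤ (p₀+1) * Hbar t ∧ (p₀+1) * Hbar t ≤ hbar t * t) := by
  obtain ⟨δ, hδ, hneg⟩ := exists_add_nonpos_of_limsup_div_lt hνpos hlimsup
  obtain rfl : h = truncation ν f := funext hh
  obtain rfl := eq_oddExtension_envelope hhbar_pos hhbar_zero hhbar_neg
  simp only [hHbar]
  have hp : 0 ≤ p₀ := by linarith
  have hc := continuousOn_truncation (ν := ν) hf
  have hzero : ∀ t, |t| ≤ δ → truncation ν f t = 0 := fun _ =>
    truncation_eq_zero_of_abs_le hodd hneg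
  have hgδ : ∀ τ ∈ Ioc 0 δ, truncation ν f τ = 0 := fun τ hτ =>
    hzero τ (by rw [abs_of_pos hτ.1]; exact hτ.2)
  refine ⟨⟨δ, hδ, fun t ht => ⟨hzero t ht, ?_⟩⟩, fun t => ?_,
    mul_integral_oddExtension_envelope_nonneg_and_le hc hδ hgδ hp⟩
  · exact oddExtension_envelope_eq_zero_of_abs_le hc hδ hgδ ht
  · have hlin : ∫ τ in 0..t, (ν * τ + f τ) = 1 / 2 * ν * t ^ 2 + ∫ τ in 0..t, f τ := by
      rw [integral_add ((continuous_const_mul ν).intervalIntegrable _ _)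
        (hf.intervalIntegrable _ _), integral_const_mul, integral_id]
      ring
    rw [← hlin]
    exact integral_le_integral_oddExtension_envelope (φ := fun τ => ν * τ + f τ) hc hδ hgδ hp
      ((continuous_const_mul ν).add hf) (fun t => by rw [hodd]; ring)
      (fun τ hτ => add_le_truncation hτ.le) t
end
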